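/- arXiv:1412.2887 — 5 statements merged into one kernel-verified Lean document; each statement's English description precedes it below -/
import Mathlib

section
/- (Proposition 1 of the paper.) Consider a sequence indexed by t ∈ ℕ of without-replacement sampling designs on finite populations U_t of size N_t with N_t → ∞, with inclusion probabilities π_{k,t}, average sample sizes n_t = Σ_{k∈U_t} π_{k,t}, variables y_t : U_t → ℝ and totals t_{y,t} = Σ_{k∈U_t} y_{k,t}. Assume: (H1) n_t/N_t → f for some f ∈ (0,1); (H2) there exists λ₁ > 0 with min_{k∈U_t} π_{k,t} ≥ λ₁ for all t; (H3) there exists C₁ with (1/N_t) Σ_{k∈U_t} y_{k,t}² ≤ C₁ for all t; (H4) limsup_{t→∞} n_t · max_{k≠l∈U_t} |π_{kl,t} − π_{k,t} π_{l,t}| < ∞. Then E[ (N_t^{-1}(t̂_{yπ,t} − t_{y,t}))² ] = O(n_t^{-1}), i.e. there exist a constant K and t₀ such that for all t ≥ t₀, E[ (N_t^{-1}(t̂_{yπ,t} − t_{y,t}))² ] ≤ K / n_t. -/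
open MeasureTheory ProbabilityTheory Finset Filter
open scoped ENNReal

/-!
The estimation error `t̂_yπ − t_y = ∑ₖ (yₖ/πₖ)(Iₖ − πₖ)` is centred, so its mean square is the
variance `∑ₖ ∑ₗ (yₖ/πₖ)(yₗ/πₗ) cov(Iₖ, Iₗ)`. Since `Var Iₖ ≤ πₖ`, the diagonal contributes at
most `∑ₖ yₖ²/λ₁`; by (H4) and Cauchy–Schwarz the off-diagonal part is at most
`(B/n) · N ∑ₖ yₖ²/λ₁²`. Dividing by `N²` and using (H3) together with `n ≤ N` gives a bound
of order `1/n`.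
-/

section QuadraticForm

variable {ι : Type*} [Fintype ι]

lemma sum_sum_mul_mul_le_of_abs_le (c : ι → ℝ) (Δ : ι → ι → ℝ) {D : ℝ}
    (hD : 0 ≤ D) (hΔ : ∀ k l, k ≠ l → |Δ k l| ≤ D) :
    ∑ k, ∑ l, c k * c l * Δ k l ≤ ∑ k, c k ^ 2 * Δ k k + D * (∑ k, |c k|) ^ 2 := by
  classical
  have hterm : ∀ k l, c k * c l * Δ k l
      ≤ (if k = l then c k ^ 2 * Δ k k else 0) + D * (|c k| * |c l|) := by
    intro k l
    split_ifs with hkl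
    · subst hkl
      have : 0 ≤ D * (|c k| * |c k|) := by positivity
      nlinarith
    · calc c k * c l * Δ k l ≤ |c k| * |c l| * |Δ k l| := by
            rw [← abs_mul, ← abs_mul]; exact le_abs_self _
        _ ≤ |c k| * |c l| * D := by gcongr; exact hΔ k l hkl
        _ = 0 + D * (|c k| * |c l|) := by ring
  calc ∑ k, ∑ l, c k * c l * Δ k l
      ≤ ∑ k, ∑ l, ((if k = l then c k ^ 2 * Δ k k else 0) + D * (|c k| * |c l|)) := by
        gcongr with k _ l _; exact hterm k l
    _ = ∑ k, c k ^ 2 * Δ k k + D * (∑ k, |c k|) ^ 2 := by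
        simp only [sum_add_distrib, sum_ite_eq, mem_univ, if_true, ← mul_sum, sq (∑ k, |c k|),
          sum_mul_sum]

end QuadraticForm

section ZeroOne

variable {Ω : Type*} [MeasurableSpace Ω] {μ : Measure Ω} {I : Ω → ℝ}

lemma memLp_of_forall_eq_zero_or_eq_one [IsFiniteMeasure μ] (hI : Measurable I)
    (h01 : ∀ ω, I ω = 0 ∨ I ω = 1) (p : ℝ≥0∞) : MemLp I p μ :=
  MemLp.of_bound hI.aestronglyMeasurable 1
    (ae_of_all _ fun ω => by rcases h01 ω with h | h <;> simp [h])

lemma variance_le_integral_of_forall_eq_zero_or_eq_one [IsProbabilityMeasure μ]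
    (hI : Measurable I) (h01 : ∀ ω, I ω = 0 ∨ I ω = 1) : Var[I; μ] ≤ μ[I] := by
  have hsq : I ^ 2 = I := funext fun ω => by rcases h01 ω with h | h <;> simp [h]
  rw [variance_eq_sub (memLp_of_forall_eq_zero_or_eq_one hI h01 2), hsq]
  nlinarith [sq_nonneg μ[I]]

end ZeroOne

lemma integral_sq_const_mul_sub_integral {Ω : Type*} [MeasurableSpace Ω] {μ : Measure Ω}
    {X : Ω → ℝ} (hX : AEMeasurable X μ) (a : ℝ) :
    ∫ ω, (a * (X ω - μ[X])) ^ 2 ∂μ = a ^ 2 * Var[X; μ] := by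
  simp only [mul_pow, integral_const_mul, variance_eq_integral hX]

section HorvitzThompson

variable {Ω : Type*} [MeasurableSpace Ω] {μ : Measure Ω} {ι : Type*} [Fintype ι]
  {I : ι → Ω → ℝ} {π : ι → ℝ}

noncomputable def htEstimator (y π : ι → ℝ) (I : ι → Ω → ℝ) (ω : Ω) : ℝ :=
  ∑ k, y k / π k * I k ω

lemma measurable_htEstimator (y : ι → ℝ) (hI : ∀ k, Measurable (I k)) :
    Measurable (htEstimator y π I) := by
  unfold htEstimator
  fun_prop

lemma integral_htEstimator (y : ι → ℝ) (hI : ∀ k, Integrable (I k) μ)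
    (hπ : ∀ k, π k = μ[I k]) (hπ0 : ∀ k, π k ≠ 0) :
    μ[htEstimator y π I] = ∑ k, y k := by
  unfold htEstimator
  rw [integral_finsetSum _ fun k _ => (hI k).const_mul _]
  refine sum_congr rfl fun k _ => ?_
  rw [integral_const_mul, ← hπ, div_mul_cancel₀ _ (hπ0 k)]

lemma variance_htEstimator [IsProbabilityMeasure μ] (y : ι → ℝ)
    (hI : ∀ k, MemLp (I k) 2 μ) :
    Var[htEstimator y π I; μ] = ∑ k, ∑ l, y k / π k * (y l / π l) * cov[I k, I l; μ] := by
  unfold htEstimator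
  rw [variance_fun_sum fun k => (hI k).const_mul _]
  simp only [covariance_const_mul_left, covariance_const_mul_right]
  exact sum_congr rfl fun k _ => sum_congr rfl fun l _ => by ring

lemma variance_htEstimator_le [IsProbabilityMeasure μ] (hImeas : ∀ k, Measurable (I k))
    (hI01 : ∀ k ω, I k ω = 0 ∨ I k ω = 1) (hπ : ∀ k, π k = μ[I k]) {lam : ℝ}
    (hlam : 0 < lam) (hπlam : ∀ k, lam ≤ π k) {D : ℝ} (hD : 0 ≤ D)
    (hcov : ∀ k l, k ≠ l → |μ[I k * I l] - π k * π l| ≤ D) (y : ι → ℝ) :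
    Var[htEstimator y π I; μ]
      ≤ (∑ k, y k ^ 2) / lam + D * Fintype.card ι * (∑ k, y k ^ 2) / lam ^ 2 := by
  have hπpos : ∀ k, 0 < π k := fun k => hlam.trans_le (hπlam k)
  have hI2 : ∀ k, MemLp (I k) 2 μ := fun k =>
    memLp_of_forall_eq_zero_or_eq_one (hImeas k) (hI01 k) 2
  have hdiag : ∀ k, (y k / π k) ^ 2 * cov[I k, I k; μ] ≤ y k ^ 2 / lam := fun k =>
    calc (y k / π k) ^ 2 * cov[I k, I k; μ] ≤ (y k / π k) ^ 2 * π k := by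
          rw [covariance_self (hImeas k).aemeasurable, hπ k]
          gcongr
          exact variance_le_integral_of_forall_eq_zero_or_eq_one (hImeas k) (hI01 k)
      _ = y k ^ 2 / π k := by field_simp [(hπpos k).ne']
      _ ≤ y k ^ 2 / lam := by gcongr; exact hπlam k
  have hoff : (∑ k, |y k / π k|) ^ 2 ≤ Fintype.card ι * (∑ k, y k ^ 2) / lam ^ 2 :=
    calc (∑ k, |y k / π k|) ^ 2 ≤ (∑ k, |y k|) ^ 2 / lam ^ 2 := by
          rw [← div_pow, sum_div]
          gcongr with k
          rw [abs_div, abs_of_pos (hπpos k)]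
          gcongr
          exact hπlam k
      _ ≤ Fintype.card ι * (∑ k, y k ^ 2) / lam ^ 2 := by
          gcongr
          simpa only [sq_abs, card_univ] using
            sq_sum_le_card_mul_sum_sq (s := univ) (f := fun k => |y k|)
  rw [variance_htEstimator y hI2]
  refine (sum_sum_mul_mul_le_of_abs_le _ _ hD fun k l hkl => ?_).trans ?_
  · rw [covariance_eq_sub (hI2 k) (hI2 l), ← hπ, ← hπ]
    exact hcov k l hkl
  · rw [mul_assoc D, mul_div_assoc]
    gcongr
    exact (sum_le_sum fun k _ => hdiag k).trans_eq (sum_div ..).symm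

lemma integral_sq_htEstimator_sub_sum_le [IsProbabilityMeasure μ] [Nonempty ι]
    (hImeas : ∀ k, Measurable (I k)) (hI01 : ∀ k ω, I k ω = 0 ∨ I k ω = 1)
    (hπ : ∀ k, π k = μ[I k]) (hπle : ∀ k, π k ≤ 1) {lam : ℝ} (hlam : 0 < lam)
    (hπlam : ∀ k, lam ≤ π k) {B : ℝ} (hB : 0 ≤ B)
    (hcov : ∀ k l, k ≠ l → (∑ j, π j) * |μ[I k * I l] - π k * π l| ≤ B)
    (y : ι → ℝ) {C : ℝ} (hC : (Fintype.card ι : ℝ)⁻¹ * ∑ k, y k ^ 2 ≤ C) :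
    ∫ ω, ((Fintype.card ι : ℝ)⁻¹ * (htEstimator y π I ω - ∑ k, y k)) ^ 2 ∂μ
      ≤ (C / lam + B * C / lam ^ 2) / ∑ k, π k := by
  set n := ∑ k, π k
  set N : ℝ := (Fintype.card ι : ℝ)
  have hπpos : ∀ k, 0 < π k := fun k => hlam.trans_le (hπlam k)
  have hnpos : 0 < n := sum_pos (fun k _ => hπpos k) univ_nonempty
  have hnN : n ≤ N := by simpa using sum_le_sum fun k (_ : k ∈ univ) => hπle k
  have hvar := variance_htEstimator_le hImeas hI01 hπ hlam hπlam
    (div_nonneg hB hnpos.le)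
    (fun k l hkl => by rw [le_div_iff₀ hnpos, mul_comm]; exact hcov k l hkl) y
  have hmean := integral_htEstimator y
    (fun k => (memLp_of_forall_eq_zero_or_eq_one (hImeas k) (hI01 k) 1).integrable le_rfl) hπ
    fun k => (hπpos k).ne'
  rw [← hmean, integral_sq_const_mul_sub_integral (measurable_htEstimator y hImeas).aemeasurable]
  set M := N⁻¹ * ∑ k, y k ^ 2
  calc N⁻¹ ^ 2 * Var[htEstimator y π I; μ]
      ≤ N⁻¹ ^ 2 * ((∑ k, y k ^ 2) / lam + B / n * N * (∑ k, y k ^ 2) / lam ^ 2) := by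
        gcongr
    _ = N⁻¹ * M / lam + B * M / (n * lam ^ 2) := by simp only [M]; field_simp
    _ ≤ n⁻¹ * C / lam + B * C / (n * lam ^ 2) := by gcongr
    _ = (C / lam + B * C / lam ^ 2) / n := by field_simp

end HorvitzThompson

theorem ht_mean_square_consistency_prop1_general
    (N : ℕ → ℕ) (hNpos : ∀ t, 1 ≤ N t)
    (Ω : ℕ → Type*) [∀ t, MeasurableSpace (Ω t)]
    (μ : ∀ t, Measure (Ω t)) [∀ t, IsProbabilityMeasure (μ t)]
    (I : ∀ t, Fin (N t) → Ω t → ℝ)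
    (hImeas : ∀ t k, Measurable (I t k))
    (hI01 : ∀ t k ω, I t k ω = 0 ∨ I t k ω = 1)
    (π : ∀ t, Fin (N t) → ℝ)
    (hπ : ∀ t k, π t k = ∫ ω, I t k ω ∂(μ t))
    (hπle : ∀ t k, π t k ≤ 1)
    (π₂ : ∀ t, Fin (N t) → Fin (N t) → ℝ)
    (hπ₂ : ∀ t k l, k ≠ l → π₂ t k l = ∫ ω, I t k ω * I t l ω ∂(μ t))
    (y : ∀ t, Fin (N t) → ℝ)
    (n : ℕ → ℝ) (hn : ∀ t, n t = ∑ k, π t k)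
    -- (H2)
    (lam₁ : ℝ) (hlam₁ : 0 < lam₁) (H2 : ∀ t k, lam₁ ≤ π t k)
    -- (H3)
    (C₁ : ℝ) (H3 : ∀ t, (1 / (N t : ℝ)) * ∑ k, y t k ^ 2 ≤ C₁)
    -- (H4): limsup_t n_t · max_{k≠l} |π_{kl,t} − π_{k,t} π_{l,t}| < ∞
    (B : ℝ)
    (H4 : ∀ᶠ t in atTop, ∀ k l : Fin (N t), k ≠ l →
            n t * |π₂ t k l - π t k * π t l| ≤ B) :
    ∃ K : ℝ, ∃ t₀ : ℕ, ∀ t ≥ t₀,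
      (∫ ω, ((N t : ℝ)⁻¹ * ((∑ k, (y t k / π t k) * I t k ω) - ∑ k, y t k)) ^ 2
          ∂(μ t)) ≤ K / n t := by
  obtain ⟨t₀, ht₀⟩ := eventually_atTop.mp H4
  refine ⟨C₁ / lam₁ + max B 0 * C₁ / lam₁ ^ 2, t₀, fun t ht => ?_⟩
  have : Nonempty (Fin (N t)) := ⟨⟨0, hNpos t⟩⟩
  -- `max B 0`: (H4) does not force `B ≥ 0` when there is no pair `k ≠ l`.
  have hcov : ∀ k l, k ≠ l →
      (∑ j, π t j) * |∫ ω, I t k ω * I t l ω ∂(μ t) - π t k * π t l| ≤ max B 0 := by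
    intro k l hkl
    rw [← hn t, ← hπ₂ t k l hkl]
    exact (ht₀ t ht k l hkl).trans (le_max_left _ _)
  rw [hn t]
  simpa only [Fintype.card_fin, htEstimator] using
    integral_sq_htEstimator_sub_sum_le (hImeas t) (hI01 t) (hπ t) (hπle t) hlam₁ (H2 t)
      (le_max_right B 0) hcov (y t) (by simpa only [Fintype.card_fin, one_div] using H3 t)

/-- Proposition 1: under (H1)–(H4), the Narain–Horvitz–Thompson estimator is
mean-square consistent, with `E[(N_t⁻¹(t̂_{yπ,t} − t_{y,t}))²] = O(n_t⁻¹)`. -/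
theorem ht_mean_square_consistency_prop1
    (N : ℕ → ℕ) (hNpos : ∀ t, 1 ≤ N t)
    (hNinf : Tendsto (fun t => (N t : ℝ)) atTop atTop)
    (Ω : ℕ → Type*) [∀ t, MeasurableSpace (Ω t)]
    (μ : ∀ t, Measure (Ω t)) [∀ t, IsProbabilityMeasure (μ t)]
    (I : ∀ t, Fin (N t) → Ω t → ℝ)
    (hImeas : ∀ t k, Measurable (I t k))
    (hI01 : ∀ t k ω, I t k ω = 0 ∨ I t k ω = 1)
    (π : ∀ t, Fin (N t) → ℝ)
    (hπ : ∀ t k, π t k = ∫ ω, I t k ω ∂(μ t))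
    (hπpos : ∀ t k, 0 < π t k) (hπle : ∀ t k, π t k ≤ 1)
    (π₂ : ∀ t, Fin (N t) → Fin (N t) → ℝ)
    (hπ₂ : ∀ t k l, k ≠ l → π₂ t k l = ∫ ω, I t k ω * I t l ω ∂(μ t))
    (y : ∀ t, Fin (N t) → ℝ)
    (n : ℕ → ℝ) (hn : ∀ t, n t = ∑ k, π t k)
    -- (H1)
    (f : ℝ) (hf : f ∈ Set.Ioo (0 : ℝ) 1)
    (H1 : Tendsto (fun t => n t / N t) atTop (nhds f))
    -- (H2)
    (lam₁ : ℝ) (hlam₁ : 0 < lam₁) (H2 : ∀ t k, lam₁ ≤ π t k)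
    -- (H3)
    (C₁ : ℝ) (H3 : ∀ t, (1 / (N t : ℝ)) * ∑ k, y t k ^ 2 ≤ C₁)
    -- (H4): limsup_t n_t · max_{k≠l} |π_{kl,t} − π_{k,t} π_{l,t}| < ∞
    (B : ℝ)
    (H4 : ∀ᶠ t in atTop, ∀ k l : Fin (N t), k ≠ l →
            n t * |π₂ t k l - π t k * π t l| ≤ B) :
    ∃ K : ℝ, ∃ t₀ : ℕ, ∀ t ≥ t₀,
      (∫ ω, ((N t : ℝ)⁻¹ * ((∑ k, (y t k / π t k) * I t k ω) - ∑ k, y t k)) ^ 2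
          ∂(μ t)) ≤ K / n t :=
  ht_mean_square_consistency_prop1_general N hNpos Ω μ I hImeas hI01 π hπ hπle π₂ hπ₂ y n hn lam₁
    hlam₁ H2 C₁ H3 B H4
end

section
/- Let a ≥ 0 and suppose the second-order inclusion probabilities satisfy π_{kl} ≤ (1 + a/n) π_k π_l for all k ≠ l in U, where n = Σ_{k∈U} π_k, and suppose y_k ≥ 0 for all k ∈ U. Then the variance of the Narain–Horvitz–Thompson estimator satisfies Var(t̂_yπ) ≤ N² ( 1/(N · min_{l∈U} π_l) + a/n ) × (1/N) Σ_{k∈U} y_k². -/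
/-!
With `c_k = y_k / π_k ≥ 0`, `Var(t̂_yπ) = ∑_{k,l} c_k c_l cov(I_k, I_l)`. Since `I_k² = I_k`,
`cov(I_k, I_k) ≤ π_k`, and off the diagonal `cov(I_k, I_l) = π_{kl} - π_k π_l ≤ (a/n) π_k π_l`.
Hence `Var(t̂_yπ) ≤ ∑_k y_k² / π_k + (a/n) (∑_k y_k)²`; the first term is at most
`∑_k y_k² / min_l π_l` and, by Cauchy–Schwarz, the second at most `(a/n) N ∑_k y_k²`.
-/

open MeasureTheory ProbabilityTheory Finset

section Indicator

variable {Ω : Type*} [MeasurableSpace Ω] {μ : Measure Ω} {f g : Ω → ℝ}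

lemma memLp_of_forall_eq_zero_or_one [IsFiniteMeasure μ] (hf : Measurable f)
    (h01 : ∀ ω, f ω = 0 ∨ f ω = 1) (p : ENNReal) : MemLp f p μ :=
  memLp_of_bounded (a := 0) (b := 1)
    (ae_of_all _ fun ω => by rcases h01 ω with h | h <;> simp [h]) hf.aestronglyMeasurable p

lemma variance_le_integral_of_forall_eq_zero_or_one [IsProbabilityMeasure μ]
    (hf : Measurable f) (h01 : ∀ ω, f ω = 0 ∨ f ω = 1) : Var[f; μ] ≤ μ[f] := by
  have hsq : f ^ 2 = f := funext fun ω => by rcases h01 ω with h | h <;> simp [h]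
  rw [variance_eq_sub (memLp_of_forall_eq_zero_or_one hf h01 2), hsq]
  linarith [sq_nonneg μ[f]]

lemma covariance_le_of_integral_mul_le [IsProbabilityMeasure μ] (hf : MemLp f 2 μ)
    (hg : MemLp g 2 μ) {b : ℝ} (h : ∫ ω, f ω * g ω ∂μ ≤ (1 + b) * (μ[f] * μ[g])) :
    cov[f, g; μ] ≤ b * (μ[f] * μ[g]) := by
  rw [covariance_eq_sub hf hg]
  change ∫ ω, f ω * g ω ∂μ - _ ≤ _
  linarith

end Indicator

section Sampling

variable {Ω ι : Type*} [MeasurableSpace Ω] {μ : Measure Ω} [IsProbabilityMeasure μ]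
  {I : ι → Ω → ℝ}

lemma covariance_le_ite_add_mul [DecidableEq ι] (hImeas : ∀ k, Measurable (I k))
    (hI01 : ∀ k ω, I k ω = 0 ∨ I k ω = 1) {b : ℝ} (hb : 0 ≤ b)
    (h : ∀ k l, k ≠ l → ∫ ω, I k ω * I l ω ∂μ ≤ (1 + b) * (μ[I k] * μ[I l])) (k l : ι) :
    cov[I k, I l; μ] ≤ (if k = l then μ[I k] else 0) + b * (μ[I k] * μ[I l]) := by
  split_ifs with hkl
  · subst hkl
    rw [covariance_self (hImeas k).aemeasurable]
    have hvar := variance_le_integral_of_forall_eq_zero_or_one (μ := μ) (hImeas k) (hI01 k)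
    have := mul_nonneg hb (mul_self_nonneg μ[I k])
    linarith
  · rw [zero_add]
    exact covariance_le_of_integral_mul_le (memLp_of_forall_eq_zero_or_one (hImeas k) (hI01 k) 2)
      (memLp_of_forall_eq_zero_or_one (hImeas l) (hI01 l) 2) (h k l hkl)

lemma variance_sum_mul_le [Fintype ι] (hImeas : ∀ k, Measurable (I k))
    (hI01 : ∀ k ω, I k ω = 0 ∨ I k ω = 1) {b : ℝ} (hb : 0 ≤ b)
    (h : ∀ k l, k ≠ l → ∫ ω, I k ω * I l ω ∂μ ≤ (1 + b) * (μ[I k] * μ[I l]))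
    {c : ι → ℝ} (hc : ∀ k, 0 ≤ c k) :
    Var[fun ω => ∑ k, c k * I k ω; μ]
      ≤ ∑ k, c k ^ 2 * μ[I k] + b * (∑ k, c k * μ[I k]) ^ 2 := by
  classical
  rw [variance_fun_sum fun k =>
    (memLp_of_forall_eq_zero_or_one (hImeas k) (hI01 k) 2).const_mul (c k)]
  calc ∑ k, ∑ l, cov[fun ω => c k * I k ω, fun ω => c l * I l ω; μ]
      = ∑ k, ∑ l, c k * c l * cov[I k, I l; μ] := by
        simp only [covariance_const_mul_left, covariance_const_mul_right, mul_assoc, mul_left_comm]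
    _ ≤ ∑ k, ∑ l, c k * c l * ((if k = l then μ[I k] else 0) + b * (μ[I k] * μ[I l])) := by
        gcongr with k _ l _
        · exact mul_nonneg (hc k) (hc l)
        · exact covariance_le_ite_add_mul hImeas hI01 hb h k l
    _ = ∑ k, c k ^ 2 * μ[I k] + b * (∑ k, c k * μ[I k]) ^ 2 := by
        rw [sq (∑ k, _), sum_mul_sum, mul_sum]
        simp only [mul_add, sum_add_distrib, mul_ite, mul_zero, sum_ite_eq, mem_univ, if_true,
          mul_sum]
        congr 1
        · exact sum_congr rfl fun k _ => by ring
        · exact sum_congr rfl fun k _ => sum_congr rfl fun l _ => by ring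

end Sampling

lemma sum_div_le_sum_div_inf' {ι : Type*} {s : Finset ι} (hs : s.Nonempty) {f π : ι → ℝ}
    (hf : ∀ k ∈ s, 0 ≤ f k) (hπ : ∀ k ∈ s, 0 < π k) :
    ∑ k ∈ s, f k / π k ≤ (∑ k ∈ s, f k) / s.inf' hs π := by
  obtain ⟨j, hj, hmin⟩ := exists_mem_eq_inf' hs π
  rw [sum_div]
  refine sum_le_sum fun k hk => div_le_div_of_nonneg_left (hf k hk) ?_ (inf'_le π hk)
  exact hmin ▸ hπ j hj

theorem ht_variance_bound_H4b_general
    (N : ℕ) [NeZero N]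
    (Ω : Type*) [MeasurableSpace Ω] (μ : Measure Ω) [IsProbabilityMeasure μ]
    (I : Fin N → Ω → ℝ)
    (hImeas : ∀ k, Measurable (I k))
    (hI01 : ∀ k ω, I k ω = 0 ∨ I k ω = 1)
    (π : Fin N → ℝ)
    (hπ : ∀ k, π k = ∫ ω, I k ω ∂μ)
    (hπpos : ∀ k, 0 < π k)
    (n : ℝ) (hn1 : 1 ≤ n)
    (π₂ : Fin N → Fin N → ℝ)
    (hπ₂ : ∀ k l, k ≠ l → π₂ k l = ∫ ω, I k ω * I l ω ∂μ)
    (a : ℝ) (ha : 0 ≤ a)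
    (H4b : ∀ k l, k ≠ l → π₂ k l ≤ (1 + a / n) * (π k * π l))
    (y : Fin N → ℝ) (hy : ∀ k, 0 ≤ y k) :
    variance (fun ω => ∑ k, (y k / π k) * I k ω) μ
      ≤ (N : ℝ) ^ 2 *
          (1 / (N * Finset.univ.inf' Finset.univ_nonempty π) + a / n)
        * ((1 / N) * ∑ k, y k ^ 2) := by
  have hb : 0 ≤ a / n := div_nonneg ha (by linarith)
  have hdiag := sum_div_le_sum_div_inf' univ_nonempty (fun k _ => sq_nonneg (y k))
    (fun k _ => hπpos k)
  have hcs : (∑ k, y k) ^ 2 ≤ N * ∑ k, y k ^ 2 := by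
    simpa using sq_sum_le_card_mul_sum_sq (s := univ) (f := y)
  have hN : (N : ℝ) ≠ 0 := NeZero.ne _
  have hπ0 : ∀ k, π k ≠ 0 := fun k => (hπpos k).ne'
  calc _ ≤ ∑ k, (y k / π k) ^ 2 * π k + a / n * (∑ k, y k / π k * π k) ^ 2 := by
        simpa only [← hπ] using variance_sum_mul_le (μ := μ) hImeas hI01 hb
          (fun k l hkl => by simpa only [← hπ, hπ₂ k l hkl] using H4b k l hkl)
          (fun k => div_nonneg (hy k) (hπpos k).le)
    _ = ∑ k, y k ^ 2 / π k + a / n * (∑ k, y k) ^ 2 := by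
        congr 1
        · exact sum_congr rfl fun k _ => by field_simp
        · rw [sum_congr rfl fun k _ => div_mul_cancel₀ (y k) (hπ0 k)]
    _ ≤ (∑ k, y k ^ 2) / univ.inf' univ_nonempty π + a / n * (N * ∑ k, y k ^ 2) := by
        gcongr
    _ = _ := by field_simp

/-- If `π_{kl} ≤ (1 + a/n) π_k π_l` for all `k ≠ l` (with `a ≥ 0`,
`n = ∑_k π_k`) and `y` is nonnegative, then
`Var(t̂_yπ) ≤ N² (1/(N·min_l π_l) + a/n) × (1/N) ∑_k y_k²`. -/
theorem ht_variance_bound_H4b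
    (N : ℕ) [NeZero N]
    (Ω : Type*) [MeasurableSpace Ω] (μ : Measure Ω) [IsProbabilityMeasure μ]
    (I : Fin N → Ω → ℝ)
    (hImeas : ∀ k, Measurable (I k))
    (hI01 : ∀ k ω, I k ω = 0 ∨ I k ω = 1)
    (π : Fin N → ℝ)
    (hπ : ∀ k, π k = ∫ ω, I k ω ∂μ)
    (hπpos : ∀ k, 0 < π k) (hπle : ∀ k, π k ≤ 1)
    (n : ℝ) (hn : n = ∑ k, π k) (hn1 : 1 ≤ n)
    (π₂ : Fin N → Fin N → ℝ)
    (hπ₂ : ∀ k l, k ≠ l → π₂ k l = ∫ ω, I k ω * I l ω ∂μ)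
    (a : ℝ) (ha : 0 ≤ a)
    (H4b : ∀ k l, k ≠ l → π₂ k l ≤ (1 + a / n) * (π k * π l))
    (y : Fin N → ℝ) (hy : ∀ k, 0 ≤ y k) :
    variance (fun ω => ∑ k, (y k / π k) * I k ω) μ
      ≤ (N : ℝ) ^ 2 *
          (1 / (N * Finset.univ.inf' Finset.univ_nonempty π) + a / n)
        * ((1 / N) * ∑ k, y k ^ 2) :=
  ht_variance_bound_H4b_general N Ω μ I hImeas hI01 π hπ hπpos n hn1 π₂ hπ₂ a ha H4b y hy
end

section
/- (Proposition 3 of the paper.) Consider a sequence indexed by t ∈ ℕ of without-replacement sampling designs on finite populations U_t of size N_t with N_t → ∞, with inclusion probabilities π_{k,t}, average sample sizes n_t = Σ_{k∈U_t} π_{k,t}, variables y_t and totals t_{y,t}. Assume: (H1) n_t/N_t → f for some f ∈ (0,1); (H2) there exists λ₁ > 0 with min_{k∈U_t} π_{k,t} ≥ λ₁ for all t; (H3) there exists C₁ with (1/N_t) Σ_{k∈U_t} y_{k,t}² ≤ C₁ for all t; (H4c) for each t, Var(t̂_{yπ,t}) ≤ Σ_{k∈U_t} π_{k,t} (y_{k,t}/π_{k,t}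 − t_{y,t}/n_t)², i.e. the variance of the Narain–Horvitz–Thompson estimator is no greater than the variance of the Hansen–Hurwitz estimator under multinomial sampling with parameter π_t. Then E[ (N_t^{-1}(t̂_{yπ,t} − t_{y,t}))² ] = O(n_t^{-1}), i.e. there exist a constant K and t₀ such that for all t ≥ t₀, E[ (N_t^{-1}(t̂_{yπ,t} − t_{y,t}))² ] ≤ K / n_t. -/
open MeasureTheory ProbabilityTheory Finset Filter

/-!
The mean-square error of the Narain–Horvitz–Thompson estimator is `N⁻² Var(t̂_yπ)`, and the
Hansen–Hurwitz variance equals `∑ y_k² / π_k - t_y² / n ≤ λ₁⁻¹ ∑ y_k² ≤ N C₁ / λ₁`.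
Hence the error is at most `C₁ / (λ₁ N)`, and `N ≥ n` because every `π_k ≤ 1`;
so the bound `K / n` holds for every `t` with `K = C₁ / λ₁`.
-/

theorem Finset.sum_mul_div_sub_sum_div_sum_sq {ι : Type*} (s : Finset ι) (y π : ι → ℝ)
    (hπ : ∀ k ∈ s, π k ≠ 0) :
    ∑ k ∈ s, π k * (y k / π k - (∑ l ∈ s, y l) / ∑ l ∈ s, π l) ^ 2
      = ∑ k ∈ s, y k ^ 2 / π k - (∑ k ∈ s, y k) ^ 2 / ∑ k ∈ s, π k := by
  set T := ∑ l ∈ s, y l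
  set n := ∑ l ∈ s, π l
  have expand : ∀ k ∈ s, π k * (y k / π k - T / n) ^ 2
      = y k ^ 2 / π k - 2 * (T / n) * y k + (T / n) ^ 2 * π k := fun k hk => by
    field_simp [hπ k hk]
    ring
  rw [sum_congr rfl expand, sum_add_distrib, sum_sub_distrib, ← mul_sum, ← mul_sum]
  by_cases hn : n = 0
  · simp [hn]
  · field_simp
    ring

theorem Finset.sum_sq_div_le_sum_sq_div {ι : Type*} (s : Finset ι) (y π : ι → ℝ) {lam : ℝ}
    (hlam : 0 < lam) (hπ : ∀ k ∈ s, lam ≤ π k) :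
    ∑ k ∈ s, y k ^ 2 / π k ≤ (∑ k ∈ s, y k ^ 2) / lam := by
  rw [sum_div]
  exact sum_le_sum fun k hk => div_le_div_of_nonneg_left (sq_nonneg _) hlam (hπ k hk)

section HorvitzThompson

variable {Ω ι : Type*} [MeasurableSpace Ω] {μ : Measure Ω}

-- A nonzero integral forces integrability, so no measurability of `I` is needed.
theorem integrable_of_integral_eq {π : ι → ℝ} {I : ι → Ω → ℝ}
    (hπ : ∀ k, π k = ∫ ω, I k ω ∂μ) (hπ0 : ∀ k, π k ≠ 0) (k : ι) : Integrable (I k) μ :=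
  .of_integral_ne_zero (hπ k ▸ hπ0 k)

variable [Fintype ι]

noncomputable def horvitzThompson (y π : ι → ℝ) (I : ι → Ω → ℝ) (ω : Ω) : ℝ :=
  ∑ k, y k / π k * I k ω

variable {y π : ι → ℝ} {I : ι → Ω → ℝ}

theorem integrable_horvitzThompson (hπ : ∀ k, π k = ∫ ω, I k ω ∂μ) (hπ0 : ∀ k, π k ≠ 0) :
    Integrable (horvitzThompson y π I) μ := by
  unfold horvitzThompson
  exact integrable_finsetSum _ fun k _ => (integrable_of_integral_eq hπ hπ0 k).const_mul _

theorem integral_horvitzThompson (hπ : ∀ k, π k = ∫ ω, I k ω ∂μ) (hπ0 : ∀ k, π k ≠ 0) :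
    ∫ ω, horvitzThompson y π I ω ∂μ = ∑ k, y k := by
  unfold horvitzThompson
  rw [integral_finsetSum _ fun k _ => (integrable_of_integral_eq hπ hπ0 k).const_mul _]
  refine sum_congr rfl fun k _ => ?_
  rw [integral_const_mul, ← hπ k, div_mul_cancel₀ _ (hπ0 k)]

theorem integral_sq_mul_horvitzThompson_sub (hπ : ∀ k, π k = ∫ ω, I k ω ∂μ)
    (hπ0 : ∀ k, π k ≠ 0) (c : ℝ) :
    ∫ ω, (c * (horvitzThompson y π I ω - ∑ k, y k)) ^ 2 ∂μ
      = c ^ 2 * Var[horvitzThompson y π I; μ] := by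
  rw [variance_eq_integral (integrable_horvitzThompson hπ hπ0).aemeasurable,
    integral_horvitzThompson hπ hπ0, ← integral_const_mul]
  simp_rw [mul_pow]

theorem integral_sq_inv_card_mul_horvitzThompson_sub_le [Nonempty ι]
    (hπ : ∀ k, π k = ∫ ω, I k ω ∂μ) (hπle : ∀ k, π k ≤ 1)
    {lam : ℝ} (hlam : 0 < lam) (hlamπ : ∀ k, lam ≤ π k)
    {C : ℝ} (hC : (1 / (Fintype.card ι : ℝ)) * ∑ k, y k ^ 2 ≤ C)
    (hvar : Var[horvitzThompson y π I; μ]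
      ≤ ∑ k, π k * (y k / π k - (∑ l, y l) / ∑ l, π l) ^ 2) :
    ∫ ω, ((Fintype.card ι : ℝ)⁻¹ * (horvitzThompson y π I ω - ∑ k, y k)) ^ 2 ∂μ
      ≤ C / lam / ∑ k, π k := by
  set N : ℝ := (Fintype.card ι : ℝ)
  have hπpos : ∀ k, 0 < π k := fun k => hlam.trans_le (hlamπ k)
  have hn : 0 < ∑ k, π k := sum_pos (fun k _ => hπpos k) univ_nonempty
  have hnN : ∑ k, π k ≤ N := by
    simpa using sum_le_sum fun k (_ : k ∈ univ) => hπle k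
  have hC0 : 0 ≤ C := le_trans (by positivity) hC
  have hHH : Var[horvitzThompson y π I; μ] ≤ (∑ k, y k ^ 2) / lam :=
    calc Var[horvitzThompson y π I; μ]
        ≤ ∑ k, y k ^ 2 / π k - (∑ k, y k) ^ 2 / ∑ k, π k := by
          rwa [← sum_mul_div_sub_sum_div_sum_sq _ _ _ fun k _ => (hπpos k).ne']
      _ ≤ ∑ k, y k ^ 2 / π k := sub_le_self _ (by positivity)
      _ ≤ (∑ k, y k ^ 2) / lam := sum_sq_div_le_sum_sq_div _ _ _ hlam fun k _ => hlamπ k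
  rw [integral_sq_mul_horvitzThompson_sub hπ fun k => (hπpos k).ne']
  calc N⁻¹ ^ 2 * Var[horvitzThompson y π I; μ]
      ≤ N⁻¹ ^ 2 * ((∑ k, y k ^ 2) / lam) := by gcongr
    _ = N⁻¹ * (1 / N * ∑ k, y k ^ 2) / lam := by ring
    _ ≤ N⁻¹ * C / lam := by gcongr
    _ ≤ (∑ k, π k)⁻¹ * C / lam := by gcongr
    _ = C / lam / ∑ k, π k := by ring

end HorvitzThompson

theorem ht_mean_square_consistency_prop3_general
    (N : ℕ → ℕ) (hNpos : ∀ t, 1 ≤ N t)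
    (Ω : ℕ → Type*) [∀ t, MeasurableSpace (Ω t)]
    (μ : ∀ t, Measure (Ω t))
    (I : ∀ t, Fin (N t) → Ω t → ℝ)
    (π : ∀ t, Fin (N t) → ℝ)
    (hπ : ∀ t k, π t k = ∫ ω, I t k ω ∂(μ t))
    (hπle : ∀ t k, π t k ≤ 1)
    (y : ∀ t, Fin (N t) → ℝ)
    (n : ℕ → ℝ) (hn : ∀ t, n t = ∑ k, π t k)
    -- (H2)
    (lam₁ : ℝ) (hlam₁ : 0 < lam₁) (H2 : ∀ t k, lam₁ ≤ π t k)
    -- (H3)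
    (C₁ : ℝ) (H3 : ∀ t, (1 / (N t : ℝ)) * ∑ k, y t k ^ 2 ≤ C₁)
    -- (H4c)
    (H4c : ∀ t, variance (fun ω => ∑ k, (y t k / π t k) * I t k ω) (μ t)
            ≤ ∑ k, π t k * (y t k / π t k - (∑ l, y t l) / n t) ^ 2) :
    ∃ K : ℝ, ∃ t₀ : ℕ, ∀ t ≥ t₀,
      (∫ ω, ((N t : ℝ)⁻¹ * ((∑ k, (y t k / π t k) * I t k ω) - ∑ k, y t k)) ^ 2
          ∂(μ t)) ≤ K / n t := by
  refine ⟨C₁ / lam₁, 0, fun t _ => ?_⟩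
  have : NeZero (N t) := ⟨by have := hNpos t; omega⟩
  have hcard : (Fintype.card (Fin (N t)) : ℝ) = N t := by simp
  have bound := integral_sq_inv_card_mul_horvitzThompson_sub_le (hπ t) (hπle t) hlam₁ (H2 t)
    (hcard ▸ H3 t) (by rw [← hn t]; exact H4c t)
  rwa [hcard, ← hn t] at bound

/-- Proposition 3: under (H1)–(H3) and (H4c) (the variance of the
Narain–Horvitz–Thompson estimator is bounded by the Hansen–Hurwitz variance
under multinomial sampling), the Narain–Horvitz–Thompson estimator is
mean-square consistent, with `E[(N_t⁻¹(t̂_{yπ,t} − t_{y,t}))²] = O(n_t⁻¹)`. -/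
theorem ht_mean_square_consistency_prop3
    (N : ℕ → ℕ) (hNpos : ∀ t, 1 ≤ N t)
    (hNinf : Tendsto (fun t => (N t : ℝ)) atTop atTop)
    (Ω : ℕ → Type*) [∀ t, MeasurableSpace (Ω t)]
    (μ : ∀ t, Measure (Ω t)) [∀ t, IsProbabilityMeasure (μ t)]
    (I : ∀ t, Fin (N t) → Ω t → ℝ)
    (hImeas : ∀ t k, Measurable (I t k))
    (hI01 : ∀ t k ω, I t k ω = 0 ∨ I t k ω = 1)
    (π : ∀ t, Fin (N t) → ℝ)
    (hπ : ∀ t k, π t k = ∫ ω, I t k ω ∂(μ t))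
    (hπpos : ∀ t k, 0 < π t k) (hπle : ∀ t k, π t k ≤ 1)
    (y : ∀ t, Fin (N t) → ℝ)
    (n : ℕ → ℝ) (hn : ∀ t, n t = ∑ k, π t k)
    -- (H1)
    (f : ℝ) (hf : f ∈ Set.Ioo (0 : ℝ) 1)
    (H1 : Tendsto (fun t => n t / N t) atTop (nhds f))
    -- (H2)
    (lam₁ : ℝ) (hlam₁ : 0 < lam₁) (H2 : ∀ t k, lam₁ ≤ π t k)
    -- (H3)
    (C₁ : ℝ) (H3 : ∀ t, (1 / (N t : ℝ)) * ∑ k, y t k ^ 2 ≤ C₁)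
    -- (H4c)
    (H4c : ∀ t, variance (fun ω => ∑ k, (y t k / π t k) * I t k ω) (μ t)
            ≤ ∑ k, π t k * (y t k / π t k - (∑ l, y t l) / n t) ^ 2) :
    ∃ K : ℝ, ∃ t₀ : ℕ, ∀ t ≥ t₀,
      (∫ ω, ((N t : ℝ)⁻¹ * ((∑ k, (y t k / π t k) * I t k ω) - ∑ k, y t k)) ^ 2
          ∂(μ t)) ≤ K / n t :=
  ht_mean_square_consistency_prop3_general N hNpos Ω μ I π hπ hπle y n hn lam₁ hlam₁ H2 C₁ H3 H4c
end

section
/- Let (M_i)_{i∈ℕ} be a [0,1]^N-valued martingale with M_0 = π ∈ (0,1]^N deterministic, and let T be a stopping time with E[T] < ∞ such that almost surely M_i = M_T for all i ≥ T and M_T takes values in {0,1}^N; write I = M_T (so E[I_k] = π_k for each k). Suppose there is a constant C such that almost surely, for every i, the number of coordinates k with M_{i+1,k} ≠ M_{i,k} is at most C. Then for any y : {1,…,N} → ℝ, the estimator t̂_y = Σ_{k=1}^N (y_k/π_k) I_k satisfies Var(t̂_y) ≤ ( max_{k} |y_k| / min_{k} π_k )² × C² × E[T]. -/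
/-!
With `c_k = y_k / π_k`, the process `S_i = ∑_k c_k M_{i,k}` is a bounded real martingale with
`S_T = t̂_y` and `S_0 = ∑_k c_k π_k` a.s. Since one step moves at most `C` coordinates, each by at
most `1`, every increment of `S` is at most `K C` in absolute value, `K = max |y| / min π`.
Martingale increments are orthogonal in `L²`, so for the stopped martingale
`E[(S_{T∧n} - S_0)²] = ∑_{i<n} E[(S_{T∧(i+1)} - S_{T∧i})²] ≤ (K C)² E[T ∧ n]`, and bounded
convergence as `n → ∞` gives `Var(S_T) ≤ E[(S_T - S_0)²] ≤ (K C)² E[T]`.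
-/

open MeasureTheory ProbabilityTheory Finset Filter Topology

theorem abs_div_le_sup'_div_inf' {ι : Type*} {s : Finset ι} (hs : s.Nonempty) {y π : ι → ℝ}
    (hπ : ∀ k ∈ s, 0 < π k) {k : ι} (hk : k ∈ s) :
    |y k / π k| ≤ s.sup' hs (fun k => |y k|) / s.inf' hs π := by
  rw [abs_div, abs_of_pos (hπ k hk)]
  exact div_le_div₀ ((abs_nonneg _).trans (le_sup' (fun k => |y k|) hk))
    (le_sup' (fun k => |y k|) hk) ((lt_inf'_iff hs).2 hπ) (inf'_le _ hk)

theorem abs_sum_mul_sub_sum_mul_le {ι : Type*} [Fintype ι] {c x x' : ι → ℝ} {K : ℝ}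
    (hc : ∀ k, |c k| ≤ K) (hx : ∀ k, x k ∈ Set.Icc (0 : ℝ) 1)
    (hx' : ∀ k, x' k ∈ Set.Icc (0 : ℝ) 1) :
    |∑ k, c k * x k - ∑ k, c k * x' k| ≤ K * #{k | x k ≠ x' k} := by
  rw [← sum_sub_distrib]
  simp_rw [← mul_sub]
  calc |∑ k, c k * (x k - x' k)| ≤ ∑ k, |c k * (x k - x' k)| := abs_sum_le_sum_abs _ _
    _ = ∑ k with x k ≠ x' k, |c k * (x k - x' k)| :=
      (sum_filter_of_ne fun k _ h => by contrapose! h; simp [h]).symm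
    _ ≤ ∑ k with x k ≠ x' k, K := sum_le_sum fun k _ => by
      rw [abs_mul]
      calc |c k| * |x k - x' k| ≤ |c k| * 1 := by
            gcongr
            exact abs_sub_le_iff.2
              ⟨by linarith [(hx k).2, (hx' k).1], by linarith [(hx k).1, (hx' k).2]⟩
        _ ≤ K := by simpa using hc k
    _ = K * #{k | x k ≠ x' k} := by rw [sum_const, nsmul_eq_mul, mul_comm]

theorem sum_range_sq_sub_min_le {x : ℕ → ℝ} {D : ℝ} (hx : ∀ i, |x (i + 1) - x i| ≤ D) (t n : ℕ) :
    ∑ i ∈ range n, (x (min (i + 1) t) - x (min i t)) ^ 2 ≤ D ^ 2 * (min n t : ℕ) := by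
  induction n with
  | zero => simp
  | succ n ih =>
    rw [sum_range_succ]
    rcases lt_or_ge n t with hn | hn
    · rw [min_eq_left hn.le] at ih
      rw [min_eq_left (Nat.succ_le_of_lt hn), min_eq_left hn.le]
      have : (x (n + 1) - x n) ^ 2 ≤ D ^ 2 := by
        simpa using pow_le_pow_left₀ (abs_nonneg _) (hx n) 2
      push_cast
      linarith
    · rw [min_eq_right hn] at ih
      rw [min_eq_right (hn.trans n.le_succ), min_eq_right hn]
      simpa using ih

theorem ProbabilityTheory.variance_le_integral_sub_sq {Ω : Type*} {m0 : MeasurableSpace Ω}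
    {μ : Measure Ω} [IsProbabilityMeasure μ] {X : Ω → ℝ} (hX : AEStronglyMeasurable X μ) (c : ℝ) :
    variance X μ ≤ ∫ ω, (X ω - c) ^ 2 ∂μ := by
  rw [← variance_sub_const hX c]
  exact variance_le_expectation_sq (hX.sub aestronglyMeasurable_const)

namespace MeasureTheory

variable {Ω : Type*} {m0 : MeasurableSpace Ω} {μ : Measure Ω}

theorem Martingale.continuousLinearMap_comp {ι E F : Type*} [Preorder ι]
    [NormedAddCommGroup E] [NormedSpace ℝ E] [CompleteSpace E]
    [NormedAddCommGroup F] [NormedSpace ℝ F] [CompleteSpace F]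
    {ℱ : Filtration ι m0} {f : ι → Ω → E} (hf : Martingale f ℱ μ) (L : E →L[ℝ] F) :
    Martingale (fun i ω => L (f i ω)) ℱ μ :=
  ⟨fun i => L.continuous.comp_stronglyMeasurable (hf.stronglyAdapted i),
    fun _ j hij => (L.comp_condExp_comm (hf.integrable j)).symm.trans
      ((hf.condExp_ae_eq hij).fun_comp L)⟩

theorem Martingale.integral_mul_sub_eq_zero {ι : Type*} [Preorder ι] {ℱ : Filtration ι m0}
    [SigmaFiniteFiltration μ ℱ] {f : ι → Ω → ℝ} (hf : Martingale f ℱ μ) {i j : ι} (hij : i ≤ j)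
    {g : Ω → ℝ} (hg : StronglyMeasurable[ℱ i] g) (hgi : Integrable (g * f i) μ)
    (hgj : Integrable (g * f j) μ) :
    ∫ ω, g ω * (f j ω - f i ω) ∂μ = 0 := by
  have hpull : μ[g * f j | ℱ i] =ᵐ[μ] g * f i := by
    filter_upwards [condExp_mul_of_stronglyMeasurable_left hg hgj (hf.integrable j),
      hf.condExp_ae_eq hij] with ω h1 h2
    rw [h1, Pi.mul_apply, h2, Pi.mul_apply]
  calc ∫ ω, g ω * (f j ω - f i ω) ∂μ = ∫ ω, (g * f j) ω - (g * f i) ω ∂μ := by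
        simp_rw [Pi.mul_apply, mul_sub]
    _ = 0 := by
      rw [integral_sub hgj hgi, sub_eq_zero, ← integral_condExp (ℱ.le i)]
      exact integral_congr_ae hpull

variable {ℱ : Filtration ℕ m0}

theorem Martingale.integral_sub_zero_sq_eq_sum [SigmaFiniteFiltration μ ℱ] {f : ℕ → Ω → ℝ}
    (hf : Martingale f ℱ μ) (hf2 : ∀ n, MemLp (f n) 2 μ) (n : ℕ) :
    ∫ ω, (f n ω - f 0 ω) ^ 2 ∂μ = ∑ i ∈ range n, ∫ ω, (f (i + 1) ω - f i ω) ^ 2 ∂μ := by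
  induction n with
  | zero => simp
  | succ n ih =>
    have hg2 : MemLp (f n - f 0) 2 μ := (hf2 n).sub (hf2 0)
    have hΔ2 : MemLp (f (n + 1) - f n) 2 μ := (hf2 (n + 1)).sub (hf2 n)
    have hcross : ∫ ω, (f n ω - f 0 ω) * (f (n + 1) ω - f n ω) ∂μ = 0 :=
      hf.integral_mul_sub_eq_zero n.le_succ
        ((hf.stronglyMeasurable n).sub ((hf.stronglyMeasurable 0).mono (ℱ.mono n.zero_le)))
        (hg2.integrable_mul (hf2 n)) (hg2.integrable_mul (hf2 (n + 1)))
    have hint_g : Integrable (fun ω => (f n ω - f 0 ω) ^ 2) μ := hg2.integrable_sq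
    have hint_Δ : Integrable (fun ω => (f (n + 1) ω - f n ω) ^ 2) μ := hΔ2.integrable_sq
    have hint_gΔ : Integrable (fun ω => (f n ω - f 0 ω) * (f (n + 1) ω - f n ω)) μ :=
      hg2.integrable_mul hΔ2
    have hexpand : ∀ ω, (f (n + 1) ω - f 0 ω) ^ 2 = ((f n ω - f 0 ω) ^ 2
        + (f (n + 1) ω - f n ω) ^ 2) + 2 * ((f n ω - f 0 ω) * (f (n + 1) ω - f n ω)) := by
      intro ω; ring
    simp_rw [hexpand]
    rw [integral_add (hint_g.fun_add hint_Δ) (hint_gΔ.const_mul 2), integral_add hint_g hint_Δ,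
      integral_const_mul, hcross, ih, sum_range_succ]
    simp

theorem Martingale.stoppedProcess [SigmaFiniteFiltration μ ℱ] {f : ℕ → Ω → ℝ}
    (hf : Martingale f ℱ μ) {τ : Ω → WithTop ℕ} (hτ : IsStoppingTime ℱ τ) :
    Martingale (stoppedProcess f τ) ℱ μ := by
  refine martingale_iff.2 ⟨?_, hf.submartingale.stoppedProcess hτ⟩
  simpa [stoppedProcess_neg] using (hf.neg.submartingale.stoppedProcess hτ).neg

theorem Martingale.integral_stopped_sub_sq_le [IsFiniteMeasure μ] {S : ℕ → Ω → ℝ}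
    (hS : Martingale S ℱ μ) {B D : ℝ} (hB : ∀ᵐ ω ∂μ, ∀ i, |S i ω| ≤ B)
    (hD : ∀ᵐ ω ∂μ, ∀ i, |S (i + 1) ω - S i ω| ≤ D) {T : Ω → ℕ}
    (hT : IsStoppingTime ℱ (fun ω => (T ω : WithTop ℕ)))
    (hTint : Integrable (fun ω => (T ω : ℝ)) μ) :
    ∫ ω, (S (T ω) ω - S 0 ω) ^ 2 ∂μ ≤ D ^ 2 * ∫ ω, (T ω : ℝ) ∂μ := by
  set X := MeasureTheory.stoppedProcess S fun ω => (T ω : WithTop ℕ)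
  have hX : Martingale X ℱ μ := hS.stoppedProcess hT
  have hX_apply : ∀ n ω, X n ω = S (min n (T ω)) ω := fun _ _ => rfl
  have hX_bdd : ∀ᵐ ω ∂μ, ∀ n, |X n ω| ≤ B := by
    filter_upwards [hB] with ω hω n
    simpa [hX_apply] using hω (min n (T ω))
  have hX2 : ∀ n, MemLp (X n) 2 μ := fun n =>
    MemLp.of_bound (hX.integrable n).1 B (by filter_upwards [hX_bdd] with ω hω using hω n)
  have hXn : ∀ n, ∫ ω, (X n ω - X 0 ω) ^ 2 ∂μ ≤ D ^ 2 * ∫ ω, (T ω : ℝ) ∂μ := by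
    intro n
    have hΔ : ∀ i, Integrable (fun ω => (X (i + 1) ω - X i ω) ^ 2) μ := fun i =>
      ((hX2 (i + 1)).sub (hX2 i)).integrable_sq
    rw [hX.integral_sub_zero_sq_eq_sum hX2, ← integral_const_mul,
      ← integral_finsetSum _ fun i _ => hΔ i]
    refine integral_mono_ae (integrable_finsetSum _ fun i _ => hΔ i) (hTint.const_mul _) ?_
    filter_upwards [hD] with ω hω
    simp only [hX_apply]
    exact (sum_range_sq_sub_min_le (x := fun i => S i ω) hω (T ω) n).trans
      (mul_le_mul_of_nonneg_left (Nat.cast_le.2 (min_le_right n (T ω))) (sq_nonneg D))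
  have hlim : Tendsto (fun n => ∫ ω, (X n ω - X 0 ω) ^ 2 ∂μ) atTop
      (𝓝 (∫ ω, (S (T ω) ω - S 0 ω) ^ 2 ∂μ)) := by
    refine tendsto_integral_of_dominated_convergence (fun _ => (2 * B) ^ 2)
      (fun n => ((hX2 n).sub (hX2 0)).integrable_sq.aestronglyMeasurable) (integrable_const _)
      (fun n => ?_) (ae_of_all _ fun ω => ?_)
    · filter_upwards [hX_bdd] with ω hω
      rw [norm_pow, Real.norm_eq_abs]
      exact pow_le_pow_left₀ (abs_nonneg _)
        ((abs_sub _ _).trans (by linarith [hω n, hω 0])) 2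
    · refine tendsto_atTop_of_eventually_const (i₀ := T ω) fun n hn => ?_
      simp [hX_apply, min_eq_right hn]
  exact le_of_tendsto' hlim hXn

end MeasureTheory

theorem martingale_sampling_variance_bound_general
    (N : ℕ) [NeZero N]
    (Ω : Type*) (m : MeasurableSpace Ω) (μ : Measure Ω) [IsProbabilityMeasure μ]
    (ℱ : Filtration ℕ m)
    (M : ℕ → Ω → (Fin N → ℝ))
    (hM : Martingale M ℱ μ)
    (hM01 : ∀ i ω k, M i ω k ∈ Set.Icc (0 : ℝ) 1)
    (π : Fin N → ℝ)
    (hπ : ∀ k, π k ∈ Set.Ioc (0 : ℝ) 1)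
    (hM0 : ∀ᵐ ω ∂μ, M 0 ω = π)
    (T : Ω → ℕ)
    (hT : IsStoppingTime ℱ (fun ω => (T ω : WithTop ℕ)))
    (hTint : Integrable (fun ω => (T ω : ℝ)) μ)
    (C : ℕ)
    (hC : ∀ᵐ ω ∂μ, ∀ i,
      (Finset.univ.filter (fun k => M (i+1) ω k ≠ M i ω k)).card ≤ C)
    (y : Fin N → ℝ) :
    variance (fun ω => ∑ k, (y k / π k) * M (T ω) ω k) μ
      ≤ (Finset.univ.sup' Finset.univ_nonempty (fun k => |y k|)
          / Finset.univ.inf' Finset.univ_nonempty π) ^ 2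
        * (C : ℝ) ^ 2 * ∫ ω, (T ω : ℝ) ∂μ := by
  set K := univ.sup' univ_nonempty (fun k => |y k|) / univ.inf' univ_nonempty π
  set c : Fin N → ℝ := fun k => y k / π k
  set S : ℕ → Ω → ℝ := fun i ω => ∑ k, c k * M i ω k
  have hS : Martingale S ℱ μ := by
    convert hM.continuousLinearMap_comp (∑ k, c k • ContinuousLinearMap.proj k) using 1
    ext i ω
    simp [S]
  have hc : ∀ k, |c k| ≤ K := fun k =>
    abs_div_le_sup'_div_inf' univ_nonempty (fun k _ => (hπ k).1) (mem_univ k)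
  have hS_bdd : ∀ i ω, |S i ω| ≤ ∑ k, |c k| := fun i ω =>
    (abs_sum_le_sum_abs _ _).trans (sum_le_sum fun k _ => by
      rw [abs_mul]
      exact mul_le_of_le_one_right (abs_nonneg _)
        ((abs_of_nonneg (hM01 i ω k).1).trans_le (hM01 i ω k).2))
  have hS_incr : ∀ᵐ ω ∂μ, ∀ i, |S (i + 1) ω - S i ω| ≤ K * C := by
    filter_upwards [hC] with ω hω i
    exact (abs_sum_mul_sub_sum_mul_le hc (hM01 (i + 1) ω) (hM01 i ω)).trans
      (mul_le_mul_of_nonneg_left (by exact_mod_cast hω i) ((abs_nonneg _).trans (hc 0)))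
  have hS_T : AEStronglyMeasurable (fun ω => S (T ω) ω) μ :=
    ((measurable_stoppedValue hS.stronglyAdapted.isStronglyProgressive_of_discrete hT).mono
      hT.measurableSpace_le le_rfl).aestronglyMeasurable
  calc variance (fun ω => S (T ω) ω) μ ≤ ∫ ω, (S (T ω) ω - ∑ k, c k * π k) ^ 2 ∂μ :=
        variance_le_integral_sub_sq hS_T _
    _ = ∫ ω, (S (T ω) ω - S 0 ω) ^ 2 ∂μ :=
        integral_congr_ae (by filter_upwards [hM0] with ω hω; simp [S, hω])
    _ ≤ (K * C) ^ 2 * ∫ ω, (T ω : ℝ) ∂μ :=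
        hS.integral_stopped_sub_sq_le (ae_of_all _ fun ω i => hS_bdd i ω) hS_incr hT hTint
    _ = K ^ 2 * (C : ℝ) ^ 2 * ∫ ω, (T ω : ℝ) ∂μ := by ring

/-- For a martingale sampling algorithm (a `[0,1]^N`-valued martingale with
deterministic initial value `π ∈ (0,1]^N`, stopped at an integrable stopping
time `T` at a `{0,1}^N`-valued vector `I` of indicators), if at most `C`
coordinates change at each step, then
`Var(t̂_y) ≤ (max_k |y_k| / min_k π_k)² C² E[T]`. -/
theorem martingale_sampling_variance_bound
    (N : ℕ) [NeZero N]
    (Ω : Type*) (m : MeasurableSpace Ω) (μ : Measure Ω) [IsProbabilityMeasure μ]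
    (ℱ : Filtration ℕ m)
    (M : ℕ → Ω → (Fin N → ℝ))
    (hM : Martingale M ℱ μ)
    (hM01 : ∀ i ω k, M i ω k ∈ Set.Icc (0 : ℝ) 1)
    (π : Fin N → ℝ)
    (hπ : ∀ k, π k ∈ Set.Ioc (0 : ℝ) 1)
    (hM0 : ∀ᵐ ω ∂μ, M 0 ω = π)
    (T : Ω → ℕ)
    (hT : IsStoppingTime ℱ (fun ω => (T ω : WithTop ℕ)))
    (hTint : Integrable (fun ω => (T ω : ℝ)) μ)
    (hstop : ∀ᵐ ω ∂μ, ∀ i, T ω ≤ i → M i ω = M (T ω) ω)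
    (hfinal : ∀ᵐ ω ∂μ, ∀ k, M (T ω) ω k = 0 ∨ M (T ω) ω k = 1)
    (C : ℕ)
    (hC : ∀ᵐ ω ∂μ, ∀ i,
      (Finset.univ.filter (fun k => M (i+1) ω k ≠ M i ω k)).card ≤ C)
    (y : Fin N → ℝ) :
    variance (fun ω => ∑ k, (y k / π k) * M (T ω) ω k) μ
      ≤ (Finset.univ.sup' Finset.univ_nonempty (fun k => |y k|)
          / Finset.univ.inf' Finset.univ_nonempty π) ^ 2
        * (C : ℝ) ^ 2 * ∫ ω, (T ω : ℝ) ∂μ :=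
  martingale_sampling_variance_bound_general N Ω m μ ℱ M hM hM01 π hπ hM0 T hT hTint C hC y
end

section
/- (Proposition 4 of the paper.) Consider a sequence indexed by t ∈ ℕ of martingale sampling algorithms: for each t, a [0,1]^{N_t}-valued martingale (M_{i,t})_{i∈ℕ} with deterministic initial value π_t ∈ (0,1]^{N_t}, and an a.s. finite stopping time T_t with E[T_t] < ∞ such that M_{i,t} = M_{T_t,t} ∈ {0,1}^{N_t} for i ≥ T_t; write I_t = M_{T_t,t}, n_t = Σ_{k} π_{k,t}, and let y_t : {1,…,N_t} → ℝ with total t_{y,t}. Assume: (H1) n_t/N_t → f for some f ∈ (0,1), with N_t → ∞; (H2) there exists λ₁ > 0 with min_k π_{k,t} ≥ λ₁ for all t; (H3b) there exists C₁ with |y_{k,t}| ≤ C₁ for all t and k; there exists a constant C with, almost surely, card{k : M_{i+1,k,t} ≠ M_{i,k,t}} ≤ C for all i and t (i.e. 𝒞_t = O(1)); and there exists a constant K₀ with E[T_t] ≤ K₀ N_t for all t (i.e. E(T_t) = O(N_t)). Then the Narain–Horvitz–Thompson estimators t̂_{yπ,t} = Σ_k (y_{k,t}/π_{k,t}) I_{k,t}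 satisfy E[ (N_t^{-1}(t̂_{yπ,t} − t_{y,t}))² ] = O(n_t^{-1}), i.e. there exist a constant K and t₀ such that for all t ≥ t₀, E[ (N_t^{-1}(t̂_{yπ,t} − t_{y,t}))² ] ≤ K / n_t. -/
/-!
The weighted process `X_i = ∑ₖ (yₖ / πₖ) M_{i,k}` is a real martingale with `X_0 = t_y`
and `X_T = t̂_yπ`. Martingale increments are orthogonal in `L²`, so
`E[(X_T - X_0)²] = ∑ᵢ E[(X_{i+1} - X_i)²]`. An increment changes at most `C` coordinates,
each by at most `1` with weight at most `C₁ / λ₁`, and it vanishes from time `T` on, so the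
sum is at most `(C C₁ / λ₁)² E[T] ≤ (C C₁ / λ₁)² K₀ N`. Dividing by `N²` and using `n ≤ N`
gives `O(1 / n)`.
-/

open MeasureTheory ProbabilityTheory Finset Filter

theorem sum_range_sq_le_of_abs_le_of_eq_zero {D : ℕ → ℝ} {B : ℝ} {T : ℕ}
    (hB : ∀ i, |D i| ≤ B) (hT : ∀ i, T ≤ i → D i = 0) (m : ℕ) :
    ∑ i ∈ range m, D i ^ 2 ≤ B ^ 2 * T := by
  have hsupp : ∑ i ∈ range (min m T), D i ^ 2 = ∑ i ∈ range m, D i ^ 2 :=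
    sum_subset (range_subset_range.2 (min_le_left m T)) fun i hi hi' => by
      simp only [mem_range, lt_min_iff, not_and, not_lt] at hi hi'
      simp [hT i (hi' hi)]
  calc ∑ i ∈ range m, D i ^ 2 = ∑ i ∈ range (min m T), D i ^ 2 := hsupp.symm
    _ ≤ ∑ _i ∈ range (min m T), B ^ 2 :=
        sum_le_sum fun i _ => sq_le_sq' (abs_le.1 (hB i)).1 (abs_le.1 (hB i)).2
    _ = B ^ 2 * (min m T : ℕ) := by simp [mul_comm]
    _ ≤ B ^ 2 * T := by gcongr; exact min_le_right m T

theorem abs_dotProduct_sub_dotProduct_le {ι : Type*} [Fintype ι] {c v w : ι → ℝ} {a : ℝ}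
    (hc : ∀ k, |c k| ≤ a) (hvw : ∀ k, |v k - w k| ≤ 1) :
    |c ⬝ᵥ v - c ⬝ᵥ w| ≤ #{k | v k ≠ w k} * a := by
  have hsupp : ∑ k with v k ≠ w k, c k * (v k - w k) = c ⬝ᵥ (v - w) :=
    sum_filter_of_ne fun k _ hk heq => hk (by rw [heq, sub_self, mul_zero])
  rw [← dotProduct_sub, ← hsupp]
  calc |∑ k with v k ≠ w k, c k * (v k - w k)|
        ≤ ∑ k with v k ≠ w k, |c k * (v k - w k)| := abs_sum_le_sum_abs _ _
    _ ≤ #{k | v k ≠ w k} • a := sum_le_card_nsmul _ _ _ fun k _ => by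
        rw [abs_mul]; exact (mul_le_of_le_one_right (abs_nonneg _) (hvw k)).trans (hc k)
    _ = #{k | v k ≠ w k} * a := nsmul_eq_mul _ _

theorem ContinuousLinearMap.martingale_comp {Ω E F : Type*} {m₀ : MeasurableSpace Ω}
    {μ : Measure Ω} {ι : Type*} [Preorder ι] {ℱ : Filtration ι m₀}
    [NormedAddCommGroup E] [NormedSpace ℝ E] [CompleteSpace E]
    [NormedAddCommGroup F] [NormedSpace ℝ F] [CompleteSpace F]
    (L : E →L[ℝ] F) {X : ι → Ω → E} (hX : Martingale X ℱ μ) :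
    Martingale (fun i => L ∘ X i) ℱ μ :=
  ⟨fun i => L.continuous.comp_stronglyMeasurable (hX.stronglyMeasurable i), fun _ j hij =>
    (L.comp_condExp_comm (hX.integrable j)).symm.trans ((hX.condExp_ae_eq hij).fun_comp L)⟩

namespace MeasureTheory.Martingale

variable {Ω : Type*} {m₀ : MeasurableSpace Ω} {μ : Measure Ω} [IsFiniteMeasure μ]

theorem integral_mul_sub_eq_zero_s12 {ι : Type*} [Preorder ι] {ℱ : Filtration ι m₀}
    {X : ι → Ω → ℝ} (hX : Martingale X ℱ μ) {i j : ι} (hij : i ≤ j) {Z : Ω → ℝ}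
    (hZ : StronglyMeasurable[ℱ i] Z) (hZX : Integrable (Z * (X j - X i)) μ) :
    ∫ ω, Z ω * (X j ω - X i ω) ∂μ = 0 := by
  have hcond : μ[X j - X i | ℱ i] =ᵐ[μ] 0 := by
    filter_upwards [condExp_sub (hX.integrable j) (hX.integrable i) (ℱ i),
      hX.condExp_ae_eq hij, hX.condExp_ae_eq (le_refl i)] with ω h hj hi
    simp [h, hj, hi]
  calc ∫ ω, Z ω * (X j ω - X i ω) ∂μ = ∫ ω, μ[Z * (X j - X i) | ℱ i] ω ∂μ :=
        (integral_condExp (ℱ.le i)).symm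
    _ = ∫ ω, (Z * μ[X j - X i | ℱ i]) ω ∂μ := integral_congr_ae <|
        condExp_mul_of_stronglyMeasurable_left hZ hZX ((hX.integrable j).sub (hX.integrable i))
    _ = 0 := by
        rw [integral_congr_ae (hcond.mono fun ω h => show (Z * _) ω = 0 by simp [h])]
        simp

theorem integral_sq_sub_eq_sum {ℱ : Filtration ℕ m₀} {X : ℕ → Ω → ℝ}
    (hX : Martingale X ℱ μ) (hX2 : ∀ i, MemLp (X i) 2 μ) (m : ℕ) :
    ∫ ω, (X m ω - X 0 ω) ^ 2 ∂μ = ∑ i ∈ range m, ∫ ω, (X (i + 1) ω - X i ω) ^ 2 ∂μ := by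
  have hsq : ∀ i j, Integrable (fun ω => (X i ω - X j ω) ^ 2) μ :=
    fun i j => ((hX2 i).sub (hX2 j)).integrable_sq
  induction m with
  | zero => simp
  | succ m ih =>
    have hcross : Integrable (fun ω => (X m ω - X 0 ω) * (X (m + 1) ω - X m ω)) μ :=
      ((hX2 m).sub (hX2 0)).integrable_mul ((hX2 (m + 1)).sub (hX2 m))
    have horth : ∫ ω, (X m ω - X 0 ω) * (X (m + 1) ω - X m ω) ∂μ = 0 :=
      hX.integral_mul_sub_eq_zero_s12 m.le_succ
        ((hX.stronglyAdapted m).sub ((hX.stronglyAdapted 0).mono (ℱ.mono m.zero_le)))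
        hcross
    have hexpand : ∀ ω, (X (m + 1) ω - X 0 ω) ^ 2 = (X m ω - X 0 ω) ^ 2 +
        2 * ((X m ω - X 0 ω) * (X (m + 1) ω - X m ω)) + (X (m + 1) ω - X m ω) ^ 2 :=
      fun ω => by ring
    simp_rw [hexpand]
    rw [integral_add ?_ (hsq _ _), integral_add (hsq m 0) (hcross.const_mul 2),
      integral_const_mul, horth, ih, sum_range_succ, mul_zero, add_zero]
    exact (hsq m 0).add (hcross.const_mul 2)

theorem integral_sq_sub_le_sq_mul_integral {ℱ : Filtration ℕ m₀}
    {X : ℕ → Ω → ℝ} (hX : Martingale X ℱ μ) {S : ℝ} (hS : ∀ i ω, |X i ω| ≤ S)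
    {T : Ω → ℕ} (hT : Integrable (fun ω => (T ω : ℝ)) μ) {B : ℝ}
    (hinc : ∀ᵐ ω ∂μ, ∀ i, |X (i + 1) ω - X i ω| ≤ B)
    (hconst : ∀ᵐ ω ∂μ, ∀ i, T ω ≤ i → X i ω = X (T ω) ω) :
    ∫ ω, (X (T ω) ω - X 0 ω) ^ 2 ∂μ ≤ B ^ 2 * ∫ ω, (T ω : ℝ) ∂μ := by
  have hmeas : ∀ i, StronglyMeasurable (X i) := fun i =>
    (hX.stronglyMeasurable i).mono (ℱ.le i)
  have hX2 : ∀ i, MemLp (X i) 2 μ := fun i =>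
    .of_bound (hmeas i).aestronglyMeasurable S (ae_of_all _ (hS i))
  have hdom : ∀ i ω, (X i ω - X 0 ω) ^ 2 ≤ (2 * S) ^ 2 := fun i ω =>
    sq_le_sq' (by linarith [abs_le.1 (hS i ω), abs_le.1 (hS 0 ω)])
      (by linarith [abs_le.1 (hS i ω), abs_le.1 (hS 0 ω)])
  have hpartial : ∀ m, ∫ ω, (X m ω - X 0 ω) ^ 2 ∂μ ≤ B ^ 2 * ∫ ω, (T ω : ℝ) ∂μ := by
    intro m
    have hsq : ∀ i, Integrable (fun ω => (X (i + 1) ω - X i ω) ^ 2) μ :=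
      fun i => ((hX2 (i + 1)).sub (hX2 i)).integrable_sq
    rw [hX.integral_sq_sub_eq_sum hX2 m, ← integral_const_mul,
      ← integral_finsetSum _ fun i _ => hsq i]
    refine integral_mono_ae (integrable_finsetSum _ fun i _ => hsq i) (hT.const_mul _) ?_
    filter_upwards [hinc, hconst] with ω hinc hconst
    refine sum_range_sq_le_of_abs_le_of_eq_zero hinc (fun i hi => ?_) m
    rw [hconst i hi, hconst (i + 1) (hi.trans i.le_succ), sub_self]
  have hlim : Tendsto (fun m => ∫ ω, (X m ω - X 0 ω) ^ 2 ∂μ) atTop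
      (nhds (∫ ω, (X (T ω) ω - X 0 ω) ^ 2 ∂μ)) := by
    refine tendsto_integral_of_dominated_convergence (fun _ => (2 * S) ^ 2)
      (fun m => (((hmeas m).sub (hmeas 0)).pow 2).aestronglyMeasurable) (integrable_const _)
      (fun m => ae_of_all _ fun ω => ?_) ?_
    · rw [Real.norm_of_nonneg (sq_nonneg _)]
      exact hdom m ω
    · filter_upwards [hconst] with ω hconst
      exact tendsto_atTop_of_eventually_const fun i hi => by rw [hconst i hi]
  exact le_of_tendsto' hlim hpartial

end MeasureTheory.Martingale

theorem integral_sq_horvitzThompson_sub_total_le {Ω ι : Type*} [Fintype ι]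
    {m₀ : MeasurableSpace Ω} {μ : Measure Ω} [IsFiniteMeasure μ] {ℱ : Filtration ℕ m₀}
    {M : ℕ → Ω → ι → ℝ} (hM : Martingale M ℱ μ) (hM01 : ∀ i ω k, M i ω k ∈ Set.Icc (0 : ℝ) 1)
    {π : ι → ℝ} (hπ : ∀ k, π k ≠ 0) (hM0 : ∀ᵐ ω ∂μ, M 0 ω = π)
    {T : Ω → ℕ} (hT : Integrable (fun ω => (T ω : ℝ)) μ)
    (hstop : ∀ᵐ ω ∂μ, ∀ i, T ω ≤ i → M i ω = M (T ω) ω)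
    {C : ℕ} (hC : ∀ᵐ ω ∂μ, ∀ i, #{k | M (i + 1) ω k ≠ M i ω k} ≤ C)
    (y : ι → ℝ) {a : ℝ} (ha : ∀ k, |y k / π k| ≤ a) :
    ∫ ω, (∑ k, y k / π k * M (T ω) ω k - ∑ k, y k) ^ 2 ∂μ ≤
      (C * a) ^ 2 * ∫ ω, (T ω : ℝ) ∂μ := by
  set c : ι → ℝ := fun k => y k / π k
  have hc : ∀ k, |c k| ≤ |a| := fun k => (ha k).trans (le_abs_self a)
  have hM1 : ∀ i j ω k, |M i ω k - M j ω k| ≤ 1 := fun i j ω k => by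
    obtain ⟨hi0, hi1⟩ := hM01 i ω k
    obtain ⟨hj0, hj1⟩ := hM01 j ω k
    exact abs_le.2 ⟨by linarith, by linarith⟩
  have hX : Martingale (fun i ω => c ⬝ᵥ M i ω) ℱ μ :=
    (LinearMap.toContinuousLinearMap (dotProductBilin ℝ ℝ c)).martingale_comp hM
  have hbound : ∀ i ω, |c ⬝ᵥ M i ω| ≤ Fintype.card ι * |a| := fun i ω => by
    have h := abs_dotProduct_sub_dotProduct_le (w := 0) hc fun k => by
      rw [Pi.zero_apply, sub_zero, abs_le]
      exact ⟨by linarith [(hM01 i ω k).1], (hM01 i ω k).2⟩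
    rw [dotProduct_zero, sub_zero] at h
    exact h.trans (by gcongr; exact card_filter_le _ _)
  have hinc : ∀ᵐ ω ∂μ, ∀ i, |c ⬝ᵥ M (i + 1) ω - c ⬝ᵥ M i ω| ≤ C * |a| := by
    filter_upwards [hC] with ω hC i
    exact (abs_dotProduct_sub_dotProduct_le hc (hM1 _ _ ω)).trans
      (by gcongr; exact_mod_cast hC i)
  have hconst : ∀ᵐ ω ∂μ, ∀ i, T ω ≤ i → c ⬝ᵥ M i ω = c ⬝ᵥ M (T ω) ω := by
    filter_upwards [hstop] with ω hstop i hi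
    rw [hstop i hi]
  have hX0 : ∀ᵐ ω ∂μ, c ⬝ᵥ M 0 ω = ∑ k, y k := by
    filter_upwards [hM0] with ω hM0
    simp [hM0, dotProduct, c, div_mul_cancel₀ _ (hπ _)]
  calc ∫ ω, (∑ k, y k / π k * M (T ω) ω k - ∑ k, y k) ^ 2 ∂μ
      = ∫ ω, (c ⬝ᵥ M (T ω) ω - c ⬝ᵥ M 0 ω) ^ 2 ∂μ :=
        integral_congr_ae (by filter_upwards [hX0] with ω hX0; rw [hX0]; rfl)
    _ ≤ (C * |a|) ^ 2 * ∫ ω, (T ω : ℝ) ∂μ :=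
        hX.integral_sq_sub_le_sq_mul_integral hbound hT hinc hconst
    _ = (C * a) ^ 2 * ∫ ω, (T ω : ℝ) ∂μ := by rw [mul_pow, mul_pow, sq_abs]

theorem martingale_sampling_mean_square_consistency_general
    (N : ℕ → ℕ) (hNpos : ∀ t, 1 ≤ N t)
    (Ω : ℕ → Type*) (m : ∀ t, MeasurableSpace (Ω t))
    (μ : ∀ t, Measure (Ω t)) [∀ t, IsProbabilityMeasure (μ t)]
    (ℱ : ∀ t, Filtration ℕ (m t))
    (M : ∀ t, ℕ → Ω t → (Fin (N t) → ℝ))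
    (hM : ∀ t, Martingale (M t) (ℱ t) (μ t))
    (hM01 : ∀ t i ω k, M t i ω k ∈ Set.Icc (0 : ℝ) 1)
    (π : ∀ t, Fin (N t) → ℝ)
    (hπ : ∀ t k, π t k ∈ Set.Ioc (0 : ℝ) 1)
    (hM0 : ∀ t, ∀ᵐ ω ∂(μ t), M t 0 ω = π t)
    (T : ∀ t, Ω t → ℕ)
    (hTint : ∀ t, Integrable (fun ω => (T t ω : ℝ)) (μ t))
    (hstop : ∀ t, ∀ᵐ ω ∂(μ t), ∀ i, T t ω ≤ i → M t i ω = M t (T t ω) ω)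
    (y : ∀ t, Fin (N t) → ℝ)
    (n : ℕ → ℝ) (hn : ∀ t, n t = ∑ k, π t k)
    -- (H2)
    (lam₁ : ℝ) (hlam₁ : 0 < lam₁) (H2 : ∀ t k, lam₁ ≤ π t k)
    -- (H3b)
    (C₁ : ℝ) (H3b : ∀ t k, |y t k| ≤ C₁)
    -- 𝒞_t = O(1)
    (C : ℕ)
    (hC : ∀ t, ∀ᵐ ω ∂(μ t), ∀ i,
      (Finset.univ.filter (fun k => M t (i+1) ω k ≠ M t i ω k)).card ≤ C)
    -- E(T_t) = O(N_t)
    (K₀ : ℝ) (hK₀ : ∀ t, (∫ ω, (T t ω : ℝ) ∂(μ t)) ≤ K₀ * N t) :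
    ∃ K : ℝ, ∃ t₀ : ℕ, ∀ t ≥ t₀,
      (∫ ω, ((N t : ℝ)⁻¹ *
          ((∑ k, (y t k / π t k) * M t (T t ω) ω k) - ∑ k, y t k)) ^ 2
        ∂(μ t)) ≤ K / n t := by
  refine ⟨(C * (C₁ / lam₁)) ^ 2 * K₀, 0, fun t _ => ?_⟩
  have hN : (0 : ℝ) < N t := by exact_mod_cast hNpos t
  have hn_pos : 0 < n t :=
    hn t ▸ sum_pos (fun k _ => (hπ t k).1) (univ_nonempty_iff.2 ⟨⟨0, hNpos t⟩⟩)
  have hn_le : n t ≤ N t := hn t ▸ (sum_le_sum fun k _ => (hπ t k).2).trans_eq (by simp)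
  have hK₀_nonneg : 0 ≤ K₀ := nonneg_of_mul_nonneg_left
    ((integral_nonneg fun ω => Nat.cast_nonneg _).trans (hK₀ t)) hN
  have hweight : ∀ k, |y t k / π t k| ≤ C₁ / lam₁ := fun k => by
    rw [abs_div, abs_of_pos (hπ t k).1]
    exact div_le_div₀ ((abs_nonneg _).trans (H3b t k)) (H3b t k) hlam₁ (H2 t k)
  have hmse := integral_sq_horvitzThompson_sub_total_le (hM t) (hM01 t)
    (fun k => (hπ t k).1.ne') (hM0 t) (hTint t) (hstop t) (hC t) (y t) hweight
  calc _ = (N t : ℝ)⁻¹ ^ 2 *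
        ∫ ω, (∑ k, y t k / π t k * M t (T t ω) ω k - ∑ k, y t k) ^ 2 ∂(μ t) := by
        simp_rw [mul_pow]; exact integral_const_mul _ _
    _ ≤ (N t : ℝ)⁻¹ ^ 2 * ((C * (C₁ / lam₁)) ^ 2 * (K₀ * N t)) := by
        gcongr; exact hmse.trans (by gcongr; exact hK₀ t)
    _ = (C * (C₁ / lam₁)) ^ 2 * K₀ / N t := by field_simp
    _ ≤ (C * (C₁ / lam₁)) ^ 2 * K₀ / n t := by gcongr

/-- Proposition 4: for a sequence of martingale sampling algorithms, under
(H1), (H2), (H3b), `𝒞_t = O(1)` and `E(T_t) = O(N_t)`, the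
Narain–Horvitz–Thompson estimator is mean-square consistent, with
`E[(N_t⁻¹(t̂_{yπ,t} − t_{y,t}))²] = O(n_t⁻¹)`. -/
theorem martingale_sampling_mean_square_consistency
    (N : ℕ → ℕ) (hNpos : ∀ t, 1 ≤ N t)
    (hNinf : Tendsto (fun t => (N t : ℝ)) atTop atTop)
    (Ω : ℕ → Type*) (m : ∀ t, MeasurableSpace (Ω t))
    (μ : ∀ t, Measure (Ω t)) [∀ t, IsProbabilityMeasure (μ t)]
    (ℱ : ∀ t, Filtration ℕ (m t))
    (M : ∀ t, ℕ → Ω t → (Fin (N t) → ℝ))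
    (hM : ∀ t, Martingale (M t) (ℱ t) (μ t))
    (hM01 : ∀ t i ω k, M t i ω k ∈ Set.Icc (0 : ℝ) 1)
    (π : ∀ t, Fin (N t) → ℝ)
    (hπ : ∀ t k, π t k ∈ Set.Ioc (0 : ℝ) 1)
    (hM0 : ∀ t, ∀ᵐ ω ∂(μ t), M t 0 ω = π t)
    (T : ∀ t, Ω t → ℕ)
    (hT : ∀ t, IsStoppingTime (ℱ t) (fun ω => (T t ω : WithTop ℕ)))
    (hTint : ∀ t, Integrable (fun ω => (T t ω : ℝ)) (μ t))
    (hstop : ∀ t, ∀ᵐ ω ∂(μ t), ∀ i, T t ω ≤ i → M t i ω = M t (T t ω) ω)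
    (hfinal : ∀ t, ∀ᵐ ω ∂(μ t), ∀ k,
      M t (T t ω) ω k = 0 ∨ M t (T t ω) ω k = 1)
    (y : ∀ t, Fin (N t) → ℝ)
    (n : ℕ → ℝ) (hn : ∀ t, n t = ∑ k, π t k)
    -- (H1)
    (f : ℝ) (hf : f ∈ Set.Ioo (0 : ℝ) 1)
    (H1 : Tendsto (fun t => n t / N t) atTop (nhds f))
    -- (H2)
    (lam₁ : ℝ) (hlam₁ : 0 < lam₁) (H2 : ∀ t k, lam₁ ≤ π t k)
    -- (H3b)
    (C₁ : ℝ) (H3b : ∀ t k, |y t k| ≤ C₁)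
    -- 𝒞_t = O(1)
    (C : ℕ)
    (hC : ∀ t, ∀ᵐ ω ∂(μ t), ∀ i,
      (Finset.univ.filter (fun k => M t (i+1) ω k ≠ M t i ω k)).card ≤ C)
    -- E(T_t) = O(N_t)
    (K₀ : ℝ) (hK₀ : ∀ t, (∫ ω, (T t ω : ℝ) ∂(μ t)) ≤ K₀ * N t) :
    ∃ K : ℝ, ∃ t₀ : ℕ, ∀ t ≥ t₀,
      (∫ ω, ((N t : ℝ)⁻¹ *
          ((∑ k, (y t k / π t k) * M t (T t ω) ω k) - ∑ k, y t k)) ^ 2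
        ∂(μ t)) ≤ K / n t :=
  martingale_sampling_mean_square_consistency_general N hNpos Ω m μ ℱ M hM hM01 π hπ hM0 T hTint
    hstop y n hn lam₁ hlam₁ H2 C₁ H3b C hC K₀ hK₀
end
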